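/- arXiv:1811.05631 — 2 statements merged into one kernel-verified Lean document; each statement's English description precedes it below -/
import Mathlib

section
/- Let φ be a Drinfeld A-module over O_L of rank d, where L is a finite extension of K, let 𝒫 be a maximal ideal of O_L, and let 𝔭 = ker(A → O_L → O_L/𝒫) be the special characteristic. Let I be an ideal of A prime to 𝔭. Then: (1) the set Tor_φ(𝒫) = {x ∈ 𝒫 : φ_a(x) = 0 for some nonzero a ∈ A} has no nontrivial I-torsion; and (2) the reduction map red_𝒫 restricts to an injection on I-torsion, φ(O_L)[I] ↪ φ^𝒫(O_L/𝒫)[I]. -/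
/-! If `1 = b + c` with `b ∈ I` and `c ∈ 𝔭`, an `I`-torsion point `x ∈ 𝒫` satisfies `x = φ_c(x)`.
Every term of `φ_c(x) = ∑ cₙ x^{qⁿ}` is `x` times an element of `𝒫` (for `n = 0` because
`c₀ = ι(c) ∈ 𝒫`, for `n ≥ 1` because `x ∈ 𝒫`), so `x = x·u` with `u ∈ 𝒫`; as `1 - u ∉ 𝒫` is
nonzero, `x = 0`. Part (2) follows by applying this to `x - y`, since each `φ_a` is additive
in characteristic `p`. -/

noncomputable section

open scoped Classical

/-- Twisted multiplication of `τ`-coefficient sequences relative to `q`: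
`(u ⋆ v) n = ∑_{i+j=n} uᵢ · (vⱼ)^(q^i)`.  This is the coefficientwise description of
multiplication in the twisted polynomial ring `L{τ}` with `τ u = u^q τ`. -/
def tmul (q : ℕ) {L : Type*} [CommRing L] (u v : ℕ → L) : ℕ → L :=
  fun n => ∑ p ∈ Finset.HasAntidiagonal.antidiagonal n, u p.1 * v p.2 ^ q ^ p.1

/-- A Drinfeld `𝔽_q[t]`-module over a commutative ring `L`, described by the
`τ`-coefficients `coeff a : ℕ → L` of the twisted polynomials `φ_a ∈ L{τ}`.
The axioms say that `a ↦ φ_a` is an `𝔽_q`-algebra homomorphism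
`𝔽_q[t] → L{τ}` (constants are mapped to constants) which is not the
composition of the structure morphism `ι = coeff · 0` with `τ⁰`. -/
structure DrinfeldModule (Fq : Type*) [Field Fq] [Fintype Fq]
    (L : Type*) [CommRing L] where
  coeff : Polynomial Fq → ℕ → L
  support_finite : ∀ a, (Function.support (coeff a)).Finite
  coeff_add : ∀ a b n, coeff (a + b) n = coeff a n + coeff b n
  coeff_mul : ∀ a b, coeff (a * b) = tmul (Fintype.card Fq) (coeff a) (coeff b)
  coeff_one : ∀ n, coeff 1 n = if n = 0 then 1 else 0
  coeff_const : ∀ (c : Fq) (n : ℕ), n ≠ 0 → coeff (Polynomial.C c) n = 0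
  nonconst : ∃ (a : Polynomial Fq) (n : ℕ), 0 < n ∧ coeff a n ≠ 0

namespace DrinfeldModule

variable {Fq : Type*} [Field Fq] [Fintype Fq] {L M : Type*} [CommRing L] [CommRing M]

/-- `φ.eval a x = φ_a(x)`: the `A = 𝔽_q[t]`-module action on `L` given by `φ`. -/
def eval (φ : DrinfeldModule Fq L) (a : Polynomial Fq) (x : L) : L :=
  ∑ᶠ n, φ.coeff a n * x ^ (Fintype.card Fq) ^ n

/-- Evaluation of `φ_a` at a point of an `L`-algebra `M`, after mapping the
coefficients along a ring homomorphism `f : L →+* M`. -/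
def evalMap (φ : DrinfeldModule Fq L) (f : L →+* M) (a : Polynomial Fq) (x : M) : M :=
  ∑ᶠ n, f (φ.coeff a n) * x ^ (Fintype.card Fq) ^ n

/-- The structure morphism `ι : A → L`, `ι(a) = ∂φ_a` (constant coefficient). -/
def iota (φ : DrinfeldModule Fq L) (a : Polynomial Fq) : L := φ.coeff a 0

/-- `φ` has generic (zero) characteristic: the structure morphism `ι` is injective. -/
def GenericChar (φ : DrinfeldModule Fq L) : Prop := Function.Injective φ.iota

/-- `φ` has rank `d`: `deg_τ φ_a = d · deg a` for all nonzero `a`. -/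
def HasRank (φ : DrinfeldModule Fq L) (d : ℕ) : Prop :=
  ∀ a : Polynomial Fq, a ≠ 0 →
    φ.coeff a (d * a.natDegree) ≠ 0 ∧ ∀ n, d * a.natDegree < n → φ.coeff a n = 0

/-- `u` is a morphism of Drinfeld modules `φ → ψ` with coefficients in `M`
(after mapping the coefficients of `φ, ψ` along `f : L →+* M`), i.e. a twisted
polynomial `u ∈ M{τ}` with `u φ_a = ψ_a u` for all `a ∈ A`. -/
def IsMorphism (φ ψ : DrinfeldModule Fq L) (f : L →+* M) (u : ℕ → M) : Prop :=
  (Function.support u).Finite ∧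
    ∀ a, tmul (Fintype.card Fq) u (fun n => f (φ.coeff a n)) =
      tmul (Fintype.card Fq) (fun n => f (ψ.coeff a n)) u

/-- `φ` and `ψ` are isogenous over `M` (i.e. there is a nonzero morphism `φ → ψ`
with coefficients in `M`). -/
def IsogenousOver (φ ψ : DrinfeldModule Fq L) (f : L →+* M) : Prop :=
  ∃ u : ℕ → M, u ≠ 0 ∧ IsMorphism φ ψ f u

/-- `End_S(φ) = A`: every endomorphism of `φ` with coefficients in `S ⊆ M`
is of the form `φ_b` for some `b ∈ A`. -/
def EndTrivialOn (φ : DrinfeldModule Fq L) (f : L →+* M) (S : Set M) : Prop :=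
  ∀ u : ℕ → M, (∀ n, u n ∈ S) → IsMorphism φ φ f u →
    ∃ b : Polynomial Fq, u = fun n => f (φ.coeff b n)

/-- A family of points is linearly independent over `A = 𝔽_q[t]`. -/
def LinIndep (φ : DrinfeldModule Fq L) {m : ℕ} (x : Fin m → L) : Prop :=
  ∀ c : Fin m → Polynomial Fq, ∑ j, φ.eval (c j) (x j) = 0 → ∀ j, c j = 0

/-- `y` lies in the `A`-submodule generated by the points `g 0, …, g (m-1)`. -/
def InSpan (φ : DrinfeldModule Fq L) {m : ℕ} (g : Fin m → L) (y : L) : Prop :=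
  ∃ c : Fin m → Polynomial Fq, y = ∑ j, φ.eval (c j) (g j)

/-- `x` is a torsion point of `φ`. -/
def IsTorsion (φ : DrinfeldModule Fq L) (x : L) : Prop :=
  ∃ a : Polynomial Fq, a ≠ 0 ∧ φ.eval a x = 0

end DrinfeldModule

/-- The action of `a ∈ A` on the Mordell–Weil group
`φ̂(R) = φ₁(R)^{e₁} × … × φ_t(R)^{e_t}` of the `t`-module
`φ̂ = φ₁^{e₁} × … × φ_t^{e_t}`. -/
def tact {Fq : Type*} [Field Fq] [Fintype Fq] {R : Type*} [CommRing R]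
    {t : ℕ} {e : Fin t → ℕ} (φ : Fin t → DrinfeldModule Fq R) (a : Polynomial Fq)
    (x : (i : Fin t) → Fin (e i) → R) : (i : Fin t) → Fin (e i) → R :=
  fun i j => (φ i).eval a (x i j)

/-- `Λ` is an `A`-submodule of the Mordell–Weil group of the `t`-module
`φ₁^{e₁} × … × φ_t^{e_t}`. -/
def IsTSubmodule {Fq : Type*} [Field Fq] [Fintype Fq] {R : Type*} [CommRing R]
    {t : ℕ} {e : Fin t → ℕ} (φ : Fin t → DrinfeldModule Fq R)
    (Λ : Set ((i : Fin t) → Fin (e i) → R)) : Prop :=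
  (0 ∈ Λ) ∧ (∀ x ∈ Λ, ∀ y ∈ Λ, x + y ∈ Λ) ∧ ∀ a : Polynomial Fq, ∀ x ∈ Λ, tact φ a x ∈ Λ

/-- The Dirichlet series `∑_{𝔭 ∈ S maximal} (#(R/𝔭))^{-s}` over a set of ideals of `R`. -/
noncomputable def dirichletSum (R : Type*) [CommRing R] (S : Set (Ideal R)) (s : ℝ) : ℝ :=
  ∑' W : {W : Ideal R // W ∈ S ∧ W.IsMaximal}, (Nat.card (R ⧸ (W.1 : Ideal R)) : ℝ) ^ (-s)

/-- A set of (maximal) ideals of `R` has positive Dirichlet density `δ > 0`. -/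
def HasPositiveDensity (R : Type*) [CommRing R] (S : Set (Ideal R)) : Prop :=
  ∃ δ : ℝ, 0 < δ ∧ Filter.Tendsto
    (fun s : ℝ => dirichletSum R S s / dirichletSum R Set.univ s)
    (nhdsWithin 1 (Set.Ioi 1)) (nhds δ)

end

namespace DrinfeldModule

variable {Fq : Type*} [Field Fq] [Fintype Fq]

section CommRing

variable {R : Type*} [CommRing R] (φ : DrinfeldModule Fq R)

lemma support_coeff_mul_pow_finite (a : Polynomial Fq) (x : R) :
    (Function.support fun n => φ.coeff a n * x ^ Fintype.card Fq ^ n).Finite :=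
  (φ.support_finite a).subset <| Function.support_mul_subset_left _ _

lemma eval_add_left (a b : Polynomial Fq) (x : R) :
    φ.eval (a + b) x = φ.eval a x + φ.eval b x := by
  simp only [eval, coeff_add, add_mul]
  exact finsum_add_distrib (φ.support_coeff_mul_pow_finite a x)
    (φ.support_coeff_mul_pow_finite b x)

lemma eval_one (x : R) : φ.eval 1 x = x := by
  rw [eval, finsum_eq_single _ 0 fun n hn => by simp [coeff_one, hn]]
  simp [coeff_one]

lemma eval_sub (p : ℕ) [ExpChar R p] {m : ℕ} (hq : Fintype.card Fq = p ^ m)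
    (a : Polynomial Fq) (x y : R) : φ.eval a (x - y) = φ.eval a x - φ.eval a y := by
  have frobenius_sub (n : ℕ) :
      (x - y) ^ Fintype.card Fq ^ n = x ^ Fintype.card Fq ^ n - y ^ Fintype.card Fq ^ n := by
    rw [hq, ← pow_mul, sub_pow_expChar_pow]
  simp only [eval, frobenius_sub, mul_sub]
  exact finsum_sub_distrib (φ.support_coeff_mul_pow_finite a x)
    (φ.support_coeff_mul_pow_finite a y)

lemma exists_mem_eval_eq_mul {P : Ideal R} {c : Polynomial Fq} (hc : φ.coeff c 0 ∈ P)
    {x : R} (hx : x ∈ P) : ∃ u ∈ P, φ.eval c x = x * u := by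
  have hq : 1 < Fintype.card Fq := Fintype.one_lt_card
  refine ⟨∑ n ∈ (φ.support_finite c).toFinset, φ.coeff c n * x ^ (Fintype.card Fq ^ n - 1),
    P.sum_mem fun n _ => ?_, ?_⟩
  · rcases Nat.eq_zero_or_pos n with rfl | hn
    · exact P.mul_mem_right _ hc
    · exact P.mul_mem_left _ <| P.pow_mem_of_mem hx _ <|
        Nat.sub_pos_of_lt (Nat.one_lt_pow hn.ne' hq)
  · rw [eval, finsum_eq_sum_of_support_subset _
      ((Function.support_mul_subset_left _ _).trans (φ.support_finite c).coe_toFinset.ge),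
      Finset.mul_sum]
    refine Finset.sum_congr rfl fun n _ => ?_
    rw [mul_left_comm, ← pow_succ', Nat.sub_add_cancel (Nat.one_le_pow _ _ (by omega))]

lemma eq_zero_of_eval_eq_self [IsDomain R] {P : Ideal R} (hP : P ≠ ⊤) {c : Polynomial Fq}
    (hc : φ.coeff c 0 ∈ P) {x : R} (hx : x ∈ P) (hcx : φ.eval c x = x) : x = 0 := by
  obtain ⟨u, hu, hxu⟩ := φ.exists_mem_eval_eq_mul hc hx
  have hu1 : 1 - u ≠ 0 := fun h =>
    hP <| (P.eq_top_iff_one).2 <| by rw [sub_eq_zero.1 h]; exact hu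
  have : x * (1 - u) = 0 := by rw [mul_sub, mul_one, ← hxu, hcx, sub_self]
  exact (mul_eq_zero.1 this).resolve_right hu1

end CommRing

section Algebra

variable {R : Type*} [CommRing R] [IsDomain R] [Algebra (Polynomial Fq) R]
  (φ : DrinfeldModule Fq R)

lemma eq_zero_of_mem_of_annihilated_of_sup_eq_top
    (hι : ∀ a, φ.coeff a 0 = algebraMap (Polynomial Fq) R a)
    {P : Ideal R} (hP : P ≠ ⊤) {I : Ideal (Polynomial Fq)}
    (hcop : I ⊔ P.comap (algebraMap (Polynomial Fq) R) = ⊤)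
    {x : R} (hx : x ∈ P) (hxI : ∀ a ∈ I, φ.eval a x = 0) : x = 0 := by
  have one_mem : (1 : Polynomial Fq) ∈ I ⊔ P.comap (algebraMap (Polynomial Fq) R) := by
    rw [hcop]; exact Submodule.mem_top
  obtain ⟨b, hb, c, hc, hbc⟩ := Submodule.mem_sup.1 one_mem
  have hcx : φ.eval c x = x := by
    rw [← zero_add (φ.eval c x), ← hxI b hb, ← eval_add_left, hbc, eval_one]
  exact φ.eq_zero_of_eval_eq_self hP (hι c ▸ hc) hx hcx

lemma eval_sub_of_algebra (a : Polynomial Fq) (x y : R) :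
    φ.eval a (x - y) = φ.eval a x - φ.eval a y := by
  obtain ⟨m, hp, hq⟩ := FiniteField.card Fq (ringChar Fq)
  have : Fact (ringChar Fq).Prime := ⟨hp⟩
  have : ExpChar R (ringChar Fq) := expChar_of_injective_ringHom
    ((algebraMap (Polynomial Fq) R).comp Polynomial.C).injective _
  exact φ.eval_sub (ringChar Fq) hq a x y

end Algebra

end DrinfeldModule

theorem reduction_injective_on_prime_to_char_torsion_general
    (Fq : Type*) [Field Fq] [Fintype Fq]
    (L : Type*) [Field L] [Algebra (Polynomial Fq) L]
    (φ : DrinfeldModule Fq ↥(integralClosure (Polynomial Fq) L))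
    (hι : ∀ a, φ.coeff a 0 =
      algebraMap (Polynomial Fq) ↥(integralClosure (Polynomial Fq) L) a)
    -- the maximal ideal `Pid` of `O_L`, with special characteristic `𝔭`:
    (Pid : Ideal ↥(integralClosure (Polynomial Fq) L)) (hPid : Pid.IsMaximal)
    -- the ideal `I` of `A`, prime to the special characteristic
    -- `𝔭 = ker(A → O_L → O_L/Pid)`:
    (I : Ideal (Polynomial Fq))
    (hcop : I ⊔ Ideal.comap
      (algebraMap (Polynomial Fq) ↥(integralClosure (Polynomial Fq) L)) Pid = ⊤) :
    -- (1)  `Tor_φ(Pid)` has no nontrivial `I`-torsion: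
    (∀ x : ↥(integralClosure (Polynomial Fq) L), x ∈ Pid →
      (∃ a : Polynomial Fq, a ≠ 0 ∧ φ.eval a x = 0) →
      (∀ a ∈ I, φ.eval a x = 0) → x = 0) ∧
    -- (2)  reduction mod `Pid` is injective on `I`-torsion:
    (∀ x y : ↥(integralClosure (Polynomial Fq) L),
      (∀ a ∈ I, φ.eval a x = 0) → (∀ a ∈ I, φ.eval a y = 0) →
      x - y ∈ Pid → x = y) := by
  have torsion_in_Pid_eq_zero : ∀ {x}, x ∈ Pid → (∀ a ∈ I, φ.eval a x = 0) → x = 0 :=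
    φ.eq_zero_of_mem_of_annihilated_of_sup_eq_top hι hPid.ne_top hcop
  refine ⟨fun x hx _ hxI => torsion_in_Pid_eq_zero hx hxI, fun x y hxI hyI hxy => ?_⟩
  refine sub_eq_zero.1 <| torsion_in_Pid_eq_zero hxy fun a ha => ?_
  rw [φ.eval_sub_of_algebra, hxI a ha, hyI a ha, sub_zero]

/-- **Proposition (injectivity of reduction on prime-to-characteristic torsion).**
Let `φ` be a Drinfeld module over `O_L` of rank `d` (`L` a finite extension of
`𝔽_q(t)`), `Pid` a maximal ideal of `O_L`, `𝔭 = ker(A → O_L/Pid)` the special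
characteristic, and `I` an ideal of `A` prime to `𝔭`.  Then
(1) the set `Tor_φ(Pid)` of torsion points lying in `Pid` has no nontrivial
`I`-torsion, and
(2) the reduction map is injective on `I`-torsion:
`φ(O_L)[I] ↪ φ^{Pid}(O_L/Pid)[I]`. -/
theorem reduction_injective_on_prime_to_char_torsion
    (Fq : Type*) [Field Fq] [Fintype Fq]
    (L : Type*) [Field L] [Algebra (Polynomial Fq) L]
    [IsFractionRing ↥(integralClosure (Polynomial Fq) L) L]
    [Module.Finite (Polynomial Fq) ↥(integralClosure (Polynomial Fq) L)]
    (d : ℕ)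
    (φ : DrinfeldModule Fq ↥(integralClosure (Polynomial Fq) L))
    (hι : ∀ a, φ.coeff a 0 =
      algebraMap (Polynomial Fq) ↥(integralClosure (Polynomial Fq) L) a)
    (hrank : φ.HasRank d)
    -- the maximal ideal `Pid` of `O_L`, with special characteristic `𝔭`:
    (Pid : Ideal ↥(integralClosure (Polynomial Fq) L)) (hPid : Pid.IsMaximal)
    -- the ideal `I` of `A`, prime to the special characteristic
    -- `𝔭 = ker(A → O_L → O_L/Pid)`:
    (I : Ideal (Polynomial Fq))
    (hcop : I ⊔ Ideal.comap
      (algebraMap (Polynomial Fq) ↥(integralClosure (Polynomial Fq) L)) Pid = ⊤) :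
    -- (1)  `Tor_φ(Pid)` has no nontrivial `I`-torsion:
    (∀ x : ↥(integralClosure (Polynomial Fq) L), x ∈ Pid →
      (∃ a : Polynomial Fq, a ≠ 0 ∧ φ.eval a x = 0) →
      (∀ a ∈ I, φ.eval a x = 0) → x = 0) ∧
    -- (2)  reduction mod `Pid` is injective on `I`-torsion:
    (∀ x y : ↥(integralClosure (Polynomial Fq) L),
      (∀ a ∈ I, φ.eval a x = 0) → (∀ a ∈ I, φ.eval a y = 0) →
      x - y ∈ Pid → x = y) :=
  reduction_injective_on_prime_to_char_torsion_general Fq L φ hι Pid hPid I hcop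
end

section
/- Let R be a commutative ring, N an R-module, e ≥ 1 an integer, and P₁, …, P_e ∈ N. Suppose that for each 1 ≤ i ≤ e there exist α_i ∈ R and elements m_{i,j} ∈ R for j ≠ i such that α_i·P_i + Σ_{j≠i} m_{i,j}·P_j = 0, and suppose the ideal of R generated by α₁, …, α_e is all of R. Then there exists a matrix M ∈ Mat_{e×e}(R) with trace(M) = 0 such that Σ_j M_{i,j}·P_j = P_i for every 1 ≤ i ≤ e. -/
/-- **Lemma (matrix of trace zero fixing a point).** Let `R` be a commutative ring,
`N` an `R`-module, and `P₁, …, P_e ∈ N`.  If for each `i` there are `α_i ∈ R` and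
`m_{i,j} ∈ R` (`j ≠ i`) with `α_i • P_i + ∑_{j ≠ i} m_{i,j} • P_j = 0`, and the
ideal generated by `α₁, …, α_e` is all of `R`, then there is a matrix
`M ∈ Mat_{e×e}(R)` of trace `0` with `∑_j M_{i,j} • P_j = P_i` for all `i`. -/
theorem exists_trace_zero_matrix_fixing_point
    {R : Type*} [CommRing R] {N : Type*} [AddCommGroup N] [Module R N]
    {e : ℕ} (he : 1 ≤ e) (P : Fin e → N) (α : Fin e → R)
    (hrel : ∀ i : Fin e, ∃ m : Fin e → R,
      α i • P i + ∑ j ∈ Finset.univ.erase i, m j • P j = 0)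
    (hunit : Ideal.span (Set.range α) = ⊤) :
    ∃ M : Matrix (Fin e) (Fin e) R, Matrix.trace M = 0 ∧
      ∀ i, ∑ j, M i j • P j = P i := by
  -- choose the off-diagonal coefficients
  choose m hm using hrel
  -- the rows annihilating P
  set A : Matrix (Fin e) (Fin e) R := fun i j => if j = i then α i else m i j with hA
  have hAP : ∀ i, ∑ j, A i j • P j = 0 := by
    intro i
    rw [← Finset.add_sum_erase _ _ (Finset.mem_univ i)]
    have : ∑ j ∈ Finset.univ.erase i, A i j • P j
        = ∑ j ∈ Finset.univ.erase i, m i j • P j := by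
      refine Finset.sum_congr rfl fun j hj => ?_
      simp [hA, Finset.ne_of_mem_erase hj]
    rw [this]
    simpa [hA] using hm i
  -- write 1 as a combination of the α's
  have h1 : (1 : R) ∈ Ideal.span (Set.range α) := by rw [hunit]; trivial
  rw [Ideal.span, Submodule.mem_span_range_iff_exists_fun] at h1
  obtain ⟨c, hc⟩ := h1
  refine ⟨fun i j => (if i = j then 1 else 0) - (e : R) * c i * A i j, ?_, ?_⟩
  · have : (Matrix.trace (fun i j => (if i = j then (1:R) else 0) - (e : R) * c i * A i j))
        = ∑ i : Fin e, ((1 : R) - (e : R) * c i * α i) := by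
      unfold Matrix.trace Matrix.diag
      exact Finset.sum_congr rfl fun i _ => by simp [hA]
    rw [this, Finset.sum_sub_distrib]
    have : ∑ i : Fin e, (e : R) * c i * α i = (e : R) * ∑ i : Fin e, c i * α i := by
      rw [Finset.mul_sum]; exact Finset.sum_congr rfl fun i _ => by ring
    rw [this]
    have hc' : ∑ i : Fin e, c i * α i = 1 := by simpa [smul_eq_mul] using hc
    simp [hc']
  · intro i
    have : ∀ j, ((if i = j then (1:R) else 0) - (e : R) * c i * A i j) • P j
        = (if i = j then (1:R) else 0) • P j - ((e : R) * c i) • A i j • P j := by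
      intro j; rw [sub_smul, mul_smul]
    simp_rw [this]
    rw [Finset.sum_sub_distrib, ← Finset.smul_sum, hAP i, smul_zero, sub_zero]
    simp
end
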